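/- arXiv:2002.02886 — 4 statements merged into one kernel-verified Lean document; each statement's English description precedes it below -/
import Mathlib

section
/- Let d ≥ 2 and 1 ≤ k ≤ d−1, let Z ⊆ ℝ^d be a convex open set, and let h : Z → ℝ^d be continuously differentiable with invertible differential Dh(z) at every z ∈ Z. Suppose there is a family 𝒮₀ of subsets of {1,…,d}, each of size d−k, such that (a) for every i ∈ {1,…,d} there exist S, S' ∈ 𝒮₀ with S ∩ S' = {i}, and (b) for every S ∈ 𝒮₀ there exists a subset T_S ⊆ {1,…,d} with |T_S| = d−k such that for every i ∈ T_S the component h_i depends only on the coordinates in S. Then there exists a permutation π of {1,…,d} such that for every i ∈ {1,…,d} the component h_{π(i)} depends only on the coordinates in {i}; i.e., h is coordinate-wise up to a permutation of the indices. -/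
/-- A function `φ` defined on (a subset) `Z ⊆ ℝ^d` *depends only on the coordinates in `S`*
if `φ z = φ z'` for all `z, z' ∈ Z` agreeing on every coordinate in `S`. -/
def DependsOnlyOn {d : ℕ} {Y : Type*} (Z : Set (Fin d → ℝ)) (φ : (Fin d → ℝ) → Y)
    (S : Set (Fin d)) : Prop :=
  ∀ z ∈ Z, ∀ z' ∈ Z, (∀ i ∈ S, z i = z' i) → φ z = φ z'

/-!
Each constraint "`hᵢ` depends only on the coordinates in `S`" forces the partial derivatives of `hᵢ`
outside `S` to vanish. If `S ∩ S' = {i}` and the two index sets `T_S`, `T_{S'}` were disjoint, then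
`2(d - k)` rows of the invertible matrix `Dh(z)` would be supported on the `2(d - k) - 1` columns of
`S ∪ S'`, which is impossible. So some component `h_j` depends only on `S` and only on `S'`; on a
convex set this means that it depends only on `S ∩ S' = {i}`. The resulting map `i ↦ j` is
injective, since otherwise `h_j` would be constant and `Dh(z)` would have a zero row.
-/

open Filter Topology

theorem LinearMap.card_le_card_of_surjective_of_apply_eq_zero {K ι κ : Type*} [Field K]
    (A : (ι → K) →ₗ[K] (κ → K)) (hA : Function.Surjective A) (U : Finset κ) (C : Finset ι)
    (hAUC : ∀ v : ι → K, (∀ j ∈ C, v j = 0) → ∀ i ∈ U, A v i = 0) :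
    U.card ≤ C.card := by
  classical
  let restrictC := LinearMap.funLeft K K ((↑) : C → ι)
  let restrictUA := LinearMap.funLeft K K ((↑) : U → κ) ∘ₗ A
  obtain ⟨extend, hextend⟩ := restrictC.exists_rightInverse_of_surjective
    (LinearMap.range_eq_top.mpr (funLeft_surjective_of_injective K K _ Subtype.val_injective))
  -- `restrictUA` kills every vector vanishing on `C`, so it factors through `restrictC`
  have hsurj : Function.Surjective (restrictUA ∘ₗ extend) := by
    intro w
    obtain ⟨v, rfl⟩ :=
      ((funLeft_surjective_of_injective K K _ Subtype.val_injective).comp hA) w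
    refine ⟨restrictC v, funext fun i => ?_⟩
    have hvanish : ∀ j ∈ C, (extend (restrictC v) - v) j = 0 := fun j hj => by
      simpa [restrictC, sub_eq_zero] using
        congrArg (fun w => w ⟨j, hj⟩) (LinearMap.congr_fun hextend (restrictC v))
    simpa [restrictUA, sub_eq_zero] using hAUC _ hvanish i i.2
  simpa using LinearMap.finrank_le_finrank_of_surjective hsurj

section DependsOnlyOn

variable {d : ℕ} {Z : Set (Fin d → ℝ)} {S S' : Set (Fin d)}

theorem DependsOnlyOn.mono {Y : Type*} {φ : (Fin d → ℝ) → Y} (hφ : DependsOnlyOn Z φ S)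
    (hSS' : S ⊆ S') : DependsOnlyOn Z φ S' :=
  fun z hz z' hz' hzz' => hφ z hz z' hz' fun i hi => hzz' i (hSS' hi)

variable {F : Type*} [NormedAddCommGroup F] [NormedSpace ℝ F] {φ : (Fin d → ℝ) → F}

theorem DependsOnlyOn.fderiv_apply_eq_zero (hZ : IsOpen Z) (hφ : DependsOnlyOn Z φ S)
    {z : Fin d → ℝ} (hz : z ∈ Z) {v : Fin d → ℝ} (hv : ∀ i ∈ S, v i = 0) :
    fderiv ℝ φ z v = 0 := by
  by_cases hdiff : DifferentiableAt ℝ φ z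
  swap
  · simp [fderiv_zero_of_not_differentiableAt hdiff]
  have hline : Continuous fun t : ℝ => z + t • v := by fun_prop
  have hnear : ∀ᶠ t : ℝ in 𝓝 0, z + t • v ∈ Z :=
    hline.continuousAt.preimage_mem_nhds (by simpa using hZ.mem_nhds hz)
  have hconst : (fun t : ℝ => φ (z + t • v)) =ᶠ[𝓝 0] fun _ => φ z := by
    filter_upwards [hnear] with t ht
    exact hφ _ ht _ hz fun i hi => by simp [hv i hi]
  rw [← hdiff.lineDeriv_eq_fderiv, lineDeriv, hconst.deriv_eq, deriv_const]

theorem dependsOnlyOn_of_fderiv_apply_eq_zero (hZo : IsOpen Z) (hZc : Convex ℝ Z)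
    (hφ : ∀ z ∈ Z, DifferentiableAt ℝ φ z)
    (hφ' : ∀ z ∈ Z, ∀ v : Fin d → ℝ, (∀ i ∈ S, v i = 0) → fderiv ℝ φ z v = 0) :
    DependsOnlyOn Z φ S := by
  intro z hz z' hz' hzz'
  let segment := AffineMap.lineMap (k := ℝ) z z'
  let s := segment ⁻¹' Z
  have hderiv : ∀ t ∈ s, HasDerivAt (φ ∘ segment) 0 t := fun t ht => by
    simpa [hφ' _ ht (z' - z) fun i hi => by simp [hzz' i hi]] using
      (hφ _ ht).hasFDerivAt.comp_hasDerivAt t AffineMap.hasDerivAt_lineMap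
  have hs : IsOpen s := hZo.preimage AffineMap.lineMap_continuous
  simpa [segment] using hs.is_const_of_deriv_eq_zero (hZc.affine_preimage segment).isPreconnected
    (fun t ht => (hderiv t ht).differentiableAt.differentiableWithinAt)
    (fun t ht => (hderiv t ht).deriv) (x := 0) (y := 1) (by simpa [s, segment])
    (by simpa [s, segment])

theorem DependsOnlyOn.inter (hZo : IsOpen Z) (hZc : Convex ℝ Z)
    (hφ : ∀ z ∈ Z, DifferentiableAt ℝ φ z) (hS : DependsOnlyOn Z φ S)
    (hS' : DependsOnlyOn Z φ S') : DependsOnlyOn Z φ (S ∩ S') := by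
  classical
  refine dependsOnlyOn_of_fderiv_apply_eq_zero hZo hZc hφ fun z hz v hv => ?_
  have hvS' : ∀ i ∈ S', S.indicator v i = 0 := fun i hi => by
    by_cases hiS : i ∈ S
    · simp [hiS, hv i ⟨hiS, hi⟩]
    · simp [hiS]
  have hvS : ∀ i ∈ S, Sᶜ.indicator v i = 0 := fun i hi => by simp [hi]
  rw [← S.indicator_self_add_compl v, map_add, hS'.fderiv_apply_eq_zero hZo hz hvS',
    hS.fderiv_apply_eq_zero hZo hz hvS, add_zero]

end DependsOnlyOn

section Components

variable {d : ℕ} {κ : Type*} {Z : Set (Fin d → ℝ)} {h : (Fin d → ℝ) → κ → ℝ}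
  {z₀ : Fin d → ℝ}

theorem card_le_card_of_dependsOnlyOn (hZ : IsOpen Z) (hz₀ : z₀ ∈ Z)
    (hdiff : DifferentiableAt ℝ h z₀) (hsurj : Function.Surjective (fderiv ℝ h z₀))
    {U : Finset κ} {C : Finset (Fin d)} (hU : ∀ i ∈ U, DependsOnlyOn Z (fun z => h z i) C) :
    U.card ≤ C.card :=
  (fderiv ℝ h z₀ : (Fin d → ℝ) →ₗ[ℝ] κ → ℝ).card_le_card_of_surjective_of_apply_eq_zero hsurj
    U C fun v hv i hi => by
      simpa [fderiv_apply hdiff] using (hU i hi).fderiv_apply_eq_zero hZ hz₀ hv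

variable (hZo : IsOpen Z) (hZc : Convex ℝ Z) (hdiff : ∀ z ∈ Z, DifferentiableAt ℝ h z)
  (hz₀ : z₀ ∈ Z) (hsurj : Function.Surjective (fderiv ℝ h z₀))
include hZo hZc hdiff hz₀ hsurj

theorem exists_dependsOnlyOn_singleton {S S' : Finset (Fin d)} {T T' : Finset κ} {i : Fin d}
    (hSS' : S ∩ S' = {i}) (hcard : S.card + S'.card ≤ T.card + T'.card)
    (hT : ∀ j ∈ T, DependsOnlyOn Z (fun z => h z j) S)
    (hT' : ∀ j ∈ T', DependsOnlyOn Z (fun z => h z j) S') :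
    ∃ j, DependsOnlyOn Z (fun z => h z j) {i} := by
  classical
  obtain ⟨j, hj⟩ : (T ∩ T').Nonempty := by
    rw [Finset.nonempty_iff_ne_empty]
    intro hdisj
    have hle : (T ∪ T').card ≤ (S ∪ S').card :=
      card_le_card_of_dependsOnlyOn hZo hz₀ (hdiff z₀ hz₀) hsurj fun j hj => by
        rcases Finset.mem_union.mp hj with hj | hj
        · exact (hT j hj).mono (by simp)
        · exact (hT' j hj).mono (by simp)
    have hTT' := Finset.card_union_add_card_inter T T'
    have hSS'card := Finset.card_union_add_card_inter S S'
    rw [hdisj, Finset.card_empty] at hTT'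
    rw [hSS', Finset.card_singleton] at hSS'card
    omega
  rw [Finset.mem_inter] at hj
  refine ⟨j, ?_⟩
  have hcomp : ∀ z ∈ Z, DifferentiableAt ℝ (fun z => h z j) z :=
    fun z hz => differentiableAt_pi.mp (hdiff z hz) j
  simpa [← Finset.coe_inter, hSS'] using
    (hT j hj.1).inter hZo hZc hcomp (hT' j hj.2)

theorem eq_of_dependsOnlyOn_singleton {i i' : Fin d} {j : κ}
    (hi : DependsOnlyOn Z (fun z => h z j) {i}) (hi' : DependsOnlyOn Z (fun z => h z j) {i'}) :
    i = i' := by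
  by_contra hne
  have hcomp : ∀ z ∈ Z, DifferentiableAt ℝ (fun z => h z j) z :=
    fun z hz => differentiableAt_pi.mp (hdiff z hz) j
  have hconst := hi.inter hZo hZc hcomp hi'
  rw [Set.singleton_inter_eq_empty.mpr (Set.mem_singleton_iff.not.mpr hne)] at hconst
  have := card_le_card_of_dependsOnlyOn (U := {j}) (C := ∅) hZo hz₀ (hdiff z₀ hz₀) hsurj
    (by simpa using hconst)
  simp at this

end Components

theorem coordinatewise_of_sharing_constraints_general {d k : ℕ}
    {Z : Set (Fin d → ℝ)} (hZopen : IsOpen Z) (hZconv : Convex ℝ Z) (hZne : Z.Nonempty)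
    (h : (Fin d → ℝ) → (Fin d → ℝ)) (hC1 : ContDiffOn ℝ 1 h Z)
    (hinv : ∀ z ∈ Z, Function.Bijective (fderiv ℝ h z))
    (𝒮₀ : Set (Finset (Fin d)))
    (hcard : ∀ S ∈ 𝒮₀, S.card = d - k)
    (ha : ∀ i : Fin d, ∃ S ∈ 𝒮₀, ∃ S' ∈ 𝒮₀, S ∩ S' = ({i} : Finset (Fin d)))
    (hb : ∀ S ∈ 𝒮₀, ∃ T : Finset (Fin d), T.card = d - k ∧
      ∀ i ∈ T, DependsOnlyOn Z (fun z => h z i) (S : Set (Fin d))) :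
    ∃ π : Equiv.Perm (Fin d), ∀ i : Fin d,
      DependsOnlyOn Z (fun z => h z (π i)) ({i} : Set (Fin d)) := by
  obtain ⟨z₀, hz₀⟩ := hZne
  have hdiff : ∀ z ∈ Z, DifferentiableAt ℝ h z := fun z hz =>
    (hC1.differentiableOn one_ne_zero z hz).differentiableAt (hZopen.mem_nhds hz)
  have hsurj := (hinv z₀ hz₀).surjective
  have hcoord : ∀ i, ∃ j, DependsOnlyOn Z (fun z => h z j) {i} := fun i => by
    obtain ⟨S, hS, S', hS', hSS'⟩ := ha i
    obtain ⟨T, hTcard, hT⟩ := hb S hS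
    obtain ⟨T', hT'card, hT'⟩ := hb S' hS'
    exact exists_dependsOnlyOn_singleton hZopen hZconv hdiff hz₀ hsurj hSS'
      (by rw [hcard S hS, hcard S' hS', hTcard, hT'card]) hT hT'
  choose π hπ using hcoord
  have hinj : Function.Injective π := fun i i' hii' =>
    eq_of_dependsOnlyOn_singleton hZopen hZconv hdiff hz₀ hsurj (hπ i) (hii' ▸ hπ i')
  exact ⟨Equiv.ofBijective π hinj.bijective_of_finite, hπ⟩

/-- Let `d ≥ 2`, `1 ≤ k ≤ d − 1`, `Z ⊆ ℝ^d` a (nonempty) convex open set,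
and `h : Z → ℝ^d` continuously differentiable with invertible differential at every point.
Suppose `𝒮₀` is a family of subsets of `{1,…,d}`, each of size `d − k`, such that
(a) every singleton `{i}` arises as the intersection of two members of `𝒮₀`, and
(b) for every `S ∈ 𝒮₀` there is a set `T_S` of `d − k` indices such that each component
`hᵢ`, `i ∈ T_S`, depends only on the coordinates in `S`.
Then there is a permutation `π` of `{1,…,d}` such that each component `h_{π(i)}` depends
only on the coordinate `i`; i.e., `h` is coordinate-wise up to a permutation. -/
theorem coordinatewise_of_sharing_constraints {d k : ℕ}
    (hd : 2 ≤ d) (hk1 : 1 ≤ k) (hkd : k ≤ d - 1)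
    {Z : Set (Fin d → ℝ)} (hZopen : IsOpen Z) (hZconv : Convex ℝ Z) (hZne : Z.Nonempty)
    (h : (Fin d → ℝ) → (Fin d → ℝ)) (hC1 : ContDiffOn ℝ 1 h Z)
    (hinv : ∀ z ∈ Z, Function.Bijective (fderiv ℝ h z))
    (𝒮₀ : Set (Finset (Fin d)))
    (hcard : ∀ S ∈ 𝒮₀, S.card = d - k)
    (ha : ∀ i : Fin d, ∃ S ∈ 𝒮₀, ∃ S' ∈ 𝒮₀, S ∩ S' = ({i} : Finset (Fin d)))
    (hb : ∀ S ∈ 𝒮₀, ∃ T : Finset (Fin d), T.card = d - k ∧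
      ∀ i ∈ T, DependsOnlyOn Z (fun z => h z i) (S : Set (Fin d))) :
    ∃ π : Equiv.Perm (Fin d), ∀ i : Fin d,
      DependsOnlyOn Z (fun z => h z (π i)) ({i} : Set (Fin d)) :=
  coordinatewise_of_sharing_constraints_general hZopen hZconv hZne h hC1 hinv 𝒮₀ hcard ha hb
end

section
/- Let M be an invertible d×d real matrix, and let T₁, T₂, S₁, S₂ ⊆ {1,…,d} with |T₁| = |S₁| and |T₂| = |S₂|. Suppose M_{ij} = 0 for every i ∈ T₁, j ∉ S₁, and M_{ij} = 0 for every i ∈ T₂, j ∉ S₂. Then |T₁ ∩ T₂| = |S₁ ∩ S₂| and |T₁ ∪ T₂| = |S₁ ∪ S₂|. -/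
open Matrix

lemma card_le_of_zero_block {d : ℕ} (M : Matrix (Fin d) (Fin d) ℝ) (hM : IsUnit M)
    (T S : Finset (Fin d)) (hz : ∀ i ∈ T, ∀ j ∉ S, M i j = 0) :
    T.card ≤ S.card := by
  classical
  have hrows : LinearIndependent ℝ (fun i ↦ M i) :=
    Matrix.linearIndependent_rows_iff_isUnit.2 hM
  set f : T → (S → ℝ) := fun i j => M i j with hf
  have hli : LinearIndependent ℝ f := by
    rw [Fintype.linearIndependent_iff]
    intro g hg
    have hg' : ∑ i : T, g i • (M i) = 0 := by
      funext j
      by_cases hj : j ∈ S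
      · have := congrFun hg ⟨j, hj⟩
        simpa [f] using this
      · simp only [Finset.sum_apply, Pi.smul_apply, Pi.zero_apply, smul_eq_mul]
        refine Finset.sum_eq_zero fun i _ => ?_
        rw [hz i i.2 j hj, mul_zero]
    have := (hrows.comp (fun i : T => (i : Fin d)) Subtype.val_injective)
    rw [Fintype.linearIndependent_iff] at this
    exact this g hg'
  have := hli.fintype_card_le_finrank
  simpa using this

/-- If `M` is an invertible `d × d` real matrix whose rows indexed by `T₁`
vanish outside the columns indexed by `S₁` (with `|T₁| = |S₁|`) and whose rows indexed by
`T₂` vanish outside the columns indexed by `S₂` (with `|T₂| = |S₂|`), then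
`|T₁ ∩ T₂| = |S₁ ∩ S₂|` and `|T₁ ∪ T₂| = |S₁ ∪ S₂|`. -/
theorem zero_block_inter_union_card {d : ℕ} (M : Matrix (Fin d) (Fin d) ℝ) (hM : IsUnit M)
    (T₁ T₂ S₁ S₂ : Finset (Fin d))
    (hc₁ : T₁.card = S₁.card) (hc₂ : T₂.card = S₂.card)
    (hzero₁ : ∀ i ∈ T₁, ∀ j ∉ S₁, M i j = 0)
    (hzero₂ : ∀ i ∈ T₂, ∀ j ∉ S₂, M i j = 0) :
    (T₁ ∩ T₂).card = (S₁ ∩ S₂).card ∧ (T₁ ∪ T₂).card = (S₁ ∪ S₂).card := by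
  have h1 : (T₁ ∩ T₂).card ≤ (S₁ ∩ S₂).card := by
    refine card_le_of_zero_block M hM _ _ fun i hi j hj => ?_
    simp only [Finset.mem_inter, not_and_or] at hi hj
    rcases hj with hj | hj
    · exact hzero₁ i hi.1 j hj
    · exact hzero₂ i hi.2 j hj
  have h2 : (T₁ ∪ T₂).card ≤ (S₁ ∪ S₂).card := by
    refine card_le_of_zero_block M hM _ _ fun i hi j hj => ?_
    simp only [Finset.mem_union, not_or] at hi hj
    rcases hi with hi | hi
    · exact hzero₁ i hi j hj.1
    · exact hzero₂ i hi j hj.2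
  have key : (T₁ ∩ T₂).card + (T₁ ∪ T₂).card = (S₁ ∩ S₂).card + (S₁ ∪ S₂).card := by
    rw [Finset.card_inter_add_card_union, Finset.card_inter_add_card_union, hc₁, hc₂]
  omega
end

section
/- Let Z ⊆ ℝ^d be a convex open set and let h : Z → ℝ^d be continuously differentiable with invertible differential Dh(z) at every z ∈ Z. If T, S ⊆ {1,…,d} are such that for every i ∈ T the component h_i depends only on the coordinates in S, then |T| ≤ |S|. -/
open Filter Topology Module LinearMap

theorem LinearMap.finrank_range_le_of_ker_le {K V W₁ W₂ : Type*} [DivisionRing K]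
    [AddCommGroup V] [Module K V] [FiniteDimensional K V] [AddCommGroup W₁] [Module K W₁]
    [AddCommGroup W₂] [Module K W₂] {f : V →ₗ[K] W₁} {g : V →ₗ[K] W₂} (h : ker f ≤ ker g) :
    finrank K (range g) ≤ finrank K (range f) := by
  have := Submodule.finrank_mono h
  have := f.finrank_range_add_finrank_ker
  have := g.finrank_range_add_finrank_ker
  omega

theorem card_le_card_of_surjective_of_apply_eq_zero {K ι κ : Type*} [DivisionRing K]
    [Fintype ι] [Fintype κ] {D : (ι → K) →ₗ[K] (κ → K)} (hD : Function.Surjective D)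
    {S : Finset ι} {T : Finset κ} (h : ∀ v, (∀ j ∈ S, v j = 0) → ∀ i ∈ T, D v i = 0) :
    T.card ≤ S.card := by
  let restrictS := funLeft K K ((↑) : S → ι)
  let restrictT := funLeft K K ((↑) : T → κ)
  have hker : ker restrictS ≤ ker (restrictT ∘ₗ D) := fun v hv =>
    funext fun i => h v (fun j hj => congrFun hv ⟨j, hj⟩) i i.2
  have hsurj : Function.Surjective (restrictT ∘ₗ D) :=
    (funLeft_surjective_of_injective K K _ Subtype.val_injective).comp hD
  calc T.card = finrank K (range (restrictT ∘ₗ D)) := by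
        rw [range_eq_top.2 hsurj, finrank_top, finrank_fintype_fun_eq_card, Fintype.card_coe]
    _ ≤ finrank K (range restrictS) := finrank_range_le_of_ker_le hker
    _ ≤ finrank K (S → K) := Submodule.finrank_le _
    _ = S.card := by rw [finrank_fintype_fun_eq_card, Fintype.card_coe]

theorem DependsOnlyOn.hasFDerivAt_apply_eq_zero {d : ℕ} {F : Type*} [NormedAddCommGroup F]
    [NormedSpace ℝ F] {Z : Set (Fin d → ℝ)} {φ : (Fin d → ℝ) → F} {S : Set (Fin d)}
    {z : Fin d → ℝ} {L : (Fin d → ℝ) →L[ℝ] F} (hφ : DependsOnlyOn Z φ S) (hZ : Z ∈ 𝓝 z)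
    (hL : HasFDerivAt φ L z) {v : Fin d → ℝ} (hv : ∀ j ∈ S, v j = 0) : L v = 0 := by
  have hline : ∀ᶠ t in 𝓝 (0 : ℝ), z + t • v ∈ Z :=
    (by fun_prop : Continuous fun t : ℝ => z + t • v).continuousAt.preimage_mem_nhds
      (by simpa using hZ)
  have hconst : (fun t : ℝ => φ (z + t • v)) =ᶠ[𝓝 0] fun _ => φ z :=
    hline.mono fun t ht => hφ _ ht z (mem_of_mem_nhds hZ) fun j hj => by simp [hv j hj]
  exact (hL.hasLineDerivAt v).unique ((hasDerivAt_const 0 (φ z)).congr_of_eventuallyEq hconst)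

theorem card_le_of_dependsOnlyOn_general {d : ℕ} {Z : Set (Fin d → ℝ)}
    (hZopen : IsOpen Z) (hZne : Z.Nonempty)
    (h : (Fin d → ℝ) → (Fin d → ℝ)) (hC1 : ContDiffOn ℝ 1 h Z)
    (hinv : ∀ z ∈ Z, Function.Bijective (fderiv ℝ h z))
    (T S : Finset (Fin d))
    (hdep : ∀ i ∈ T, DependsOnlyOn Z (fun z => h z i) (S : Set (Fin d))) :
    T.card ≤ S.card := by
  obtain ⟨z, hz⟩ := hZne
  have hZ : Z ∈ 𝓝 z := hZopen.mem_nhds hz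
  have hD : HasFDerivAt h (fderiv ℝ h z) z :=
    ((hC1.contDiffAt hZ).differentiableAt one_ne_zero).hasFDerivAt
  refine card_le_card_of_surjective_of_apply_eq_zero (hinv z hz).surjective ?_
  intro v hv i hi
  exact (hdep i hi).hasFDerivAt_apply_eq_zero hZ (hasFDerivAt_pi'.1 hD i) hv

/-- Let `Z ⊆ ℝ^d` be a (nonempty) convex open set and `h : Z → ℝ^d`
continuously differentiable with invertible differential at every point of `Z`. If every
component `hᵢ`, `i ∈ T`, depends only on the coordinates in `S`, then `|T| ≤ |S|`. -/
theorem card_le_of_dependsOnlyOn {d : ℕ} {Z : Set (Fin d → ℝ)}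
    (hZopen : IsOpen Z) (hZconv : Convex ℝ Z) (hZne : Z.Nonempty)
    (h : (Fin d → ℝ) → (Fin d → ℝ)) (hC1 : ContDiffOn ℝ 1 h Z)
    (hinv : ∀ z ∈ Z, Function.Bijective (fderiv ℝ h z))
    (T S : Finset (Fin d))
    (hdep : ∀ i ∈ T, DependsOnlyOn Z (fun z => h z i) (S : Set (Fin d))) :
    T.card ≤ S.card :=
  card_le_of_dependsOnlyOn_general hZopen hZne h hC1 hinv T S hdep
end

section
/- Let d ≥ 2, 1 ≤ k ≤ d−1, let Z ⊆ ℝ^d be a convex open set, and let h : Z → ℝ^d be continuously differentiable with invertible differential at every point of Z. Let S₁, S₂ ⊆ {1,…,d} with |S₁| = |S₂| = d−k and S₁ ≠ S₂, and let T ⊆ {1,…,d} with |T| = d−k. Then it is impossible that for every i ∈ T the component h_i depends only on the coordinates in S₁ and also depends only on the coordinates in S₂. -/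
/-!
At a point `z₀ ∈ Z`, every row `i ∈ T` of the differential `Dh(z₀)` vanishes on the coordinate
directions outside `S₁ ∩ S₂`, because `hᵢ` is constant along those directions. Hence the rows
indexed by `T` span a space of dimension at most `|S₁ ∩ S₂| < d − k = |T|`, whereas invertibility
of `Dh(z₀)` makes them linearly independent.
-/

open Module

lemma DependsOnlyOn.map_eq_zero_of_hasFDerivAt {d : ℕ} {F : Type*} [NormedAddCommGroup F]
    [NormedSpace ℝ F] {Z : Set (Fin d → ℝ)} {φ : (Fin d → ℝ) → F} {S : Set (Fin d)}
    (hφ : DependsOnlyOn Z φ S) (hZ : IsOpen Z) {z : Fin d → ℝ} (hz : z ∈ Z)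
    {φ' : (Fin d → ℝ) →L[ℝ] F} (hφ' : HasFDerivAt φ φ' z) {v : Fin d → ℝ}
    (hv : ∀ i ∈ S, v i = 0) : φ' v = 0 := by
  have hline : HasDerivAt (fun t : ℝ => φ (z + t • v)) (φ' v) 0 := hφ'.hasLineDerivAt v
  have hmem : ∀ᶠ t : ℝ in nhds 0, z + t • v ∈ Z :=
    (continuous_const.add (continuous_id.smul continuous_const)).continuousAt.preimage_mem_nhds
      (by simpa using hZ.mem_nhds hz)
  have hconst : (fun t : ℝ => φ (z + t • v)) =ᶠ[nhds 0] fun _ => φ z := by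
    filter_upwards [hmem] with t ht
    exact hφ _ ht _ hz fun i hi => by simp [hv i hi]
  exact (hconst.hasDerivAt_iff.mp hline).unique (hasDerivAt_const _ _)

lemma LinearMap.finrank_range_le_card_of_map_single_eq_zero {K M ι : Type*} [Field K]
    [AddCommGroup M] [Module K M] [Fintype ι] [DecidableEq ι] (L : (ι → K) →ₗ[K] M)
    (s : Finset ι) (hL : ∀ j ∉ s, L (Pi.single j 1) = 0) : finrank K L.range ≤ s.card := by
  classical
  have hspan : L.range ≤ Submodule.span K (s.image fun j => L (Pi.single j 1) : Set M) := by
    rw [LinearMap.range_eq_map, ← (Pi.basisFun K ι).span_eq, Submodule.map_span,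
      Submodule.span_le]
    rintro _ ⟨_, ⟨j, rfl⟩, rfl⟩
    rw [SetLike.mem_coe, Pi.basisFun_apply]
    by_cases hj : j ∈ s
    · exact Submodule.subset_span (Finset.mem_coe.2 (Finset.mem_image_of_mem _ hj))
    · simp [hL j hj]
  calc finrank K L.range
      ≤ finrank K (Submodule.span K (s.image fun j => L (Pi.single j 1) : Set M)) :=
        Submodule.finrank_mono hspan
    _ ≤ (s.image fun j => L (Pi.single j 1)).card := finrank_span_finset_le_card _
    _ ≤ s.card := Finset.card_image_le

lemma Finset.card_inter_lt_of_card_eq_of_ne {α : Type*} [DecidableEq α] {s t : Finset α}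
    (hcard : s.card = t.card) (hne : s ≠ t) : (s ∩ t).card < s.card := by
  refine Finset.card_lt_card (Finset.inter_subset_left.ssubset_of_ne fun heq => ?_)
  exact hne (Finset.eq_of_subset_of_card_le (Finset.inter_eq_left.mp heq) hcard.ge)

theorem mixture_exclusion_general {d k : ℕ}
    {Z : Set (Fin d → ℝ)} (hZopen : IsOpen Z) (hZne : Z.Nonempty)
    (h : (Fin d → ℝ) → (Fin d → ℝ)) (hC1 : ContDiffOn ℝ 1 h Z)
    (hinv : ∀ z ∈ Z, Function.Bijective (fderiv ℝ h z))
    (S₁ S₂ T : Finset (Fin d))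
    (hS₁ : S₁.card = d - k) (hS₂ : S₂.card = d - k) (hS : S₁ ≠ S₂)
    (hT : T.card = d - k) :
    ¬ (∀ i ∈ T, DependsOnlyOn Z (fun z => h z i) (S₁ : Set (Fin d)) ∧
        DependsOnlyOn Z (fun z => h z i) (S₂ : Set (Fin d))) := by
  intro hdep
  obtain ⟨z₀, hz₀⟩ := hZne
  have hD : HasFDerivAt h (fderiv ℝ h z₀) z₀ :=
    ((hC1.contDiffAt (hZopen.mem_nhds hz₀)).differentiableAt one_ne_zero).hasFDerivAt
  let L := LinearMap.funLeft ℝ ℝ (Subtype.val : T → Fin d) ∘ₗ (fderiv ℝ h z₀).toLinearMap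
  have hL : Function.Surjective L :=
    (LinearMap.funLeft_surjective_of_injective ℝ ℝ _ Subtype.val_injective).comp (hinv z₀ hz₀).2
  have hvanish : ∀ j ∉ S₁ ∩ S₂, L (Pi.single j 1) = 0 := by
    intro j hj
    ext ⟨i, hi⟩
    have hDi := (hasFDerivAt_apply i _).comp z₀ hD
    rcases not_and_or.mp (Finset.mem_inter.not.mp hj) with hj | hj
    · exact (hdep i hi).1.map_eq_zero_of_hasFDerivAt hZopen hz₀ hDi fun _ hl =>
        Pi.single_eq_of_ne (ne_of_mem_of_not_mem hl hj) _
    · exact (hdep i hi).2.map_eq_zero_of_hasFDerivAt hZopen hz₀ hDi fun _ hl =>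
        Pi.single_eq_of_ne (ne_of_mem_of_not_mem hl hj) _
  have hrank := L.finrank_range_le_card_of_map_single_eq_zero _ hvanish
  rw [LinearMap.range_eq_top.2 hL, finrank_top, finrank_fintype_fun_eq_card,
    Fintype.card_coe, hT] at hrank
  have hinter := Finset.card_inter_lt_of_card_eq_of_ne (hS₁.trans hS₂.symm) hS
  omega

/-- Let `d ≥ 2`, `1 ≤ k ≤ d − 1`, `Z ⊆ ℝ^d` a (nonempty) convex open set
and `h : Z → ℝ^d` continuously differentiable with invertible differential at every point.
If `S₁ ≠ S₂` both have cardinality `d − k` and `T` has cardinality `d − k`, then it is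
impossible that every component `hᵢ`, `i ∈ T`, depends only on the coordinates in `S₁` and
also only on the coordinates in `S₂`. -/
theorem mixture_exclusion {d k : ℕ} (hd : 2 ≤ d) (hk1 : 1 ≤ k) (hkd : k ≤ d - 1)
    {Z : Set (Fin d → ℝ)} (hZopen : IsOpen Z) (hZconv : Convex ℝ Z) (hZne : Z.Nonempty)
    (h : (Fin d → ℝ) → (Fin d → ℝ)) (hC1 : ContDiffOn ℝ 1 h Z)
    (hinv : ∀ z ∈ Z, Function.Bijective (fderiv ℝ h z))
    (S₁ S₂ T : Finset (Fin d))
    (hS₁ : S₁.card = d - k) (hS₂ : S₂.card = d - k) (hS : S₁ ≠ S₂)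
    (hT : T.card = d - k) :
    ¬ (∀ i ∈ T, DependsOnlyOn Z (fun z => h z i) (S₁ : Set (Fin d)) ∧
        DependsOnlyOn Z (fun z => h z i) (S₂ : Set (Fin d))) :=
  mixture_exclusion_general hZopen hZne h hC1 hinv S₁ S₂ T hS₁ hS₂ hS hT
end
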